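/- Consider the tree automaton B_S with states {0,1,2,3}, signature Σ = {a (binary), S (constant)}, final states {3}, and transitions S ⇝ 0, a(0,q) ⇝ 1, a(1,q) ⇝ 2, a(2,q) ⇝ 3 for q ∈ {0,1,2}, and a(3,q) ⇝ 3, a(q',3) ⇝ 3 for all q ∈ {0,1,2}, q' ∈ {0,1,2,3}. Then B_S accepts a ground term t if and only if t contains a subterm of the form a(a(a(S,x),y),z), i.e., a redex of the rule a(a(a(S,x),y),z) → a(a(x,z),a(y,z)). -/

import Mathlib

/-- Terms over a ranked signature `F` (with arity `ar`) and variables `V`.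
States of a tree automaton are treated as extra constants, i.e. variables. -/
inductive Tm (F : Type) (ar : F → ℕ) (V : Type) : Type
  | var : V → Tm F ar V
  | node : (f : F) → (Fin (ar f) → Tm F ar V) → Tm F ar V

namespace Tm

variable {F : Type} {ar : F → ℕ}

/-- Substitution. -/
def subst {V W : Type} (σ : V → Tm F ar W) : Tm F ar V → Tm F ar W
  | var x => σ x
  | node f ts => node f (fun i => (ts i).subst σ)

/-- The list of variable occurrences of a term. -/
def varsList {V : Type} : Tm F ar V → List V
  | var x => [x]
  | node f ts => (List.ofFn (fun i => (ts i).varsList)).flatten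

/-- A term is linear if every variable occurs at most once. -/
def Linear {V : Type} (t : Tm F ar V) : Prop := t.varsList.Nodup

/-- Subterm relation. -/
inductive Subtm {V : Type} : Tm F ar V → Tm F ar V → Prop
  | refl (t : Tm F ar V) : Subtm t t
  | child {s : Tm F ar V} {f : F} {ts : Fin (ar f) → Tm F ar V} (i : Fin (ar f)) :
      Subtm s (ts i) → Subtm s (node f ts)

end Tm

/-- Ground terms: terms without variables. -/
abbrev GTm (F : Type) (ar : F → ℕ) : Type := Tm F ar Empty

/-- A ground term viewed as a term over any variable type. -/
def GTm.toTm {F : Type} {ar : F → ℕ} {V : Type} (t : GTm F ar) : Tm F ar V :=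
  t.subst (fun e => e.elim)

/-- A (bottom-up, possibly non-deterministic) tree automaton:
final states and a transition relation `δ`. -/
structure Automaton (F : Type) (ar : F → ℕ) (Q : Type) where
  final : Set Q
  delta : (f : F) → (Fin (ar f) → Q) → Q → Prop

namespace Automaton

variable {F : Type} {ar : F → ℕ} {Q Q' : Type}

/-- One rewrite step `⇝` induced by an automaton on terms over `Σ ∪ Q`. -/
inductive Step (A : Automaton F ar Q) : Tm F ar Q → Tm F ar Q → Prop
  | base {f : F} {qs : Fin (ar f) → Q} {q : Q} :
      A.delta f qs q → Step A (.node f (fun i => .var (qs i))) (.var q)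
  | congr {f : F} {ts : Fin (ar f) → Tm F ar Q} {i : Fin (ar f)} {t' : Tm F ar Q} :
      Step A (ts i) t' → Step A (.node f ts) (.node f (Function.update ts i t'))

/-- The reduction relation `⇝*`. -/
def Steps (A : Automaton F ar Q) : Tm F ar Q → Tm F ar Q → Prop :=
  Relation.ReflTransGen (Step A)

/-- A state is reachable if some ground term reduces to it. -/
def Reachable (A : Automaton F ar Q) (q : Q) : Prop :=
  ∃ t : GTm F ar, A.Steps t.toTm (.var q)

/-- The language of the automaton. -/
def Lang (A : Automaton F ar Q) : Set (GTm F ar) :=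
  {t | ∃ q ∈ A.final, A.Steps t.toTm (.var q)}

/-- The product automaton. -/
def prod (A : Automaton F ar Q) (B : Automaton F ar Q') : Automaton F ar (Q × Q') where
  final := A.final ×ˢ B.final
  delta f qs q := A.delta f (fun i => (qs i).1) q.1 ∧ B.delta f (fun i => (qs i).2) q.2

/-- Determinism. -/
def Deterministic (A : Automaton F ar Q) : Prop :=
  ∀ (f : F) (qs : Fin (ar f) → Q) (q q' : Q), A.delta f qs q → A.delta f qs q' → q = q'

/-- Completeness. -/
def Complete (A : Automaton F ar Q) : Prop :=
  ∀ (f : F) (qs : Fin (ar f) → Q), ∃ q : Q, A.delta f qs q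

end Automaton

/-- A term rewriting system: a set of rules over variables `X`. -/
abbrev TRS (F : Type) (ar : F → ℕ) (X : Type) : Type := Set (Tm F ar X × Tm F ar X)

/-- A TRS is left-linear if no variable occurs twice in a left-hand side. -/
def LeftLinear {F : Type} {ar : F → ℕ} {X : Type} (R : TRS F ar X) : Prop :=
  ∀ p ∈ R, p.1.Linear

/-- One rewrite step `→_R` (on terms over any variable type `V`). -/
inductive RStep {F : Type} {ar : F → ℕ} {X V : Type} (R : TRS F ar X) :
    Tm F ar V → Tm F ar V → Prop
  | base {l r : Tm F ar X} {σ : X → Tm F ar V} :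
      (l, r) ∈ R → RStep R (l.subst σ) (r.subst σ)
  | congr {f : F} {ts : Fin (ar f) → Tm F ar V} {i : Fin (ar f)} {t' : Tm F ar V} :
      RStep R (ts i) t' → RStep R (.node f ts) (.node f (Function.update ts i t'))

/-- `t` is an `R`-normal form. -/
def IsNF {F : Type} {ar : F → ℕ} {X V : Type} (R : TRS F ar X) (t : Tm F ar V) : Prop :=
  ∀ t', ¬ RStep R t t'

/-- The signature of combinatory logic restricted to `S`: binary application `a`
and constant `S`. -/
inductive SSig : Type
  | a : SSig
  | S : SSig

/-- Arities: `a` is binary, `S` is a constant. -/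
def sar : SSig → ℕ
  | .a => 2
  | .S => 0

/-- Application on terms over the signature. -/
def app {V : Type} (u v : Tm SSig sar V) : Tm SSig sar V :=
  Tm.node SSig.a ![u, v]

/-- The constant `S` as a term. -/
def STm {V : Type} : Tm SSig sar V :=
  Tm.node SSig.S ![]

/-- The first argument position of `a`. -/
def i0 : Fin (sar SSig.a) := ⟨0, by decide⟩

/-- The second argument position of `a`. -/
def i1 : Fin (sar SSig.a) := ⟨1, by decide⟩

/-- The automaton `B_S` recognizing ground terms containing an `S`-redex. -/
def BS : Automaton SSig sar (Fin 4) where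
  final := {3}
  delta f qs q :=
    match f with
    | .S => q = 0
    | .a =>
        (qs i0 = 0 ∧ qs i1 ≠ 3 ∧ q = 1) ∨
        (qs i0 = 1 ∧ qs i1 ≠ 3 ∧ q = 2) ∨
        (qs i0 = 2 ∧ qs i1 ≠ 3 ∧ q = 3) ∨
        (qs i0 = 3 ∧ qs i1 ≠ 3 ∧ q = 3) ∨
        (qs i1 = 3 ∧ q = 3)

/-! `B_S` is deterministic and complete, so a ground term is accepted iff the state computed by
its unique run is `3`. Every ground term is `S x₁ ⋯ xₖ`; if it contains no redex then `k ≤ 2` and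
its state is `k`. Hence the state is `3` exactly on terms containing a redex, by induction:
`a(u,v)` is itself a redex iff `u = S x y`, so it has state `3` iff `u` has state `2` (a redex at
the root) or `3`, or `v` has state `3` (a redex below). -/

namespace Tm

variable {F : Type} {ar : F → ℕ} {Q : Type}

def eval (δ : (f : F) → (Fin (ar f) → Q) → Q) : Tm F ar Q → Q
  | var q => q
  | node f ts => δ f (fun i => (ts i).eval δ)

end Tm

namespace Automaton

variable {F : Type} {ar : F → ℕ} {Q : Type} {A : Automaton F ar Q}

theorem Steps.node_update {f : F} {ts : Fin (ar f) → Tm F ar Q} {i : Fin (ar f)}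
    {t' : Tm F ar Q} (h : A.Steps (ts i) t') :
    A.Steps (.node f ts) (.node f (Function.update ts i t')) := by
  induction h with
  | refl => rw [Function.update_eq_self]; exact .refl
  | @tail b c _ hbc ih =>
    refine ih.tail ?_
    have hstep := Step.congr (A := A) (f := f) (ts := Function.update ts i b) (i := i)
      (by rwa [Function.update_self])
    rwa [Function.update_idem] at hstep

theorem Steps.node {f : F} {ts ts' : Fin (ar f) → Tm F ar Q} (h : ∀ i, A.Steps (ts i) (ts' i)) :
    A.Steps (.node f ts) (.node f ts') := by
  classical
  suffices ∀ s : Finset (Fin (ar f)), A.Steps (.node f ts) (.node f (s.piecewise ts' ts)) by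
    simpa using this Finset.univ
  intro s
  induction s using Finset.induction_on with
  | empty => rw [Finset.piecewise_empty]; exact .refl
  | insert j s hj ih =>
    rw [Finset.piecewise_insert]
    exact ih.trans (Steps.node_update (by rw [Finset.piecewise_eq_of_notMem _ _ _ hj]; exact h j))

theorem steps_var_eval {δ : (f : F) → (Fin (ar f) → Q) → Q}
    (hδ : ∀ f qs, A.delta f qs (δ f qs)) (t : Tm F ar Q) : A.Steps t (.var (t.eval δ)) := by
  induction t with
  | var q => exact .refl
  | node f ts ih => exact (Steps.node ih).tail (.base (hδ f _))

theorem Step.eval_eq {δ : (f : F) → (Fin (ar f) → Q) → Q}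
    (hδ : ∀ f qs q, A.delta f qs q → δ f qs = q) {t t' : Tm F ar Q} (h : A.Step t t') :
    t'.eval δ = t.eval δ := by
  induction h with
  | base hd => exact (hδ _ _ _ hd).symm
  | @congr f ts i t' _ ih =>
    simp only [Tm.eval]
    congr 1
    funext j
    rcases eq_or_ne j i with rfl | hji
    · rw [Function.update_self, ih]
    · rw [Function.update_of_ne hji]

theorem Steps.eval_eq {δ : (f : F) → (Fin (ar f) → Q) → Q}
    (hδ : ∀ f qs q, A.delta f qs q → δ f qs = q) {t t' : Tm F ar Q} (h : A.Steps t t') :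
    t'.eval δ = t.eval δ := by
  induction h with
  | refl => rfl
  | tail _ hstep ih => exact (hstep.eval_eq hδ).trans ih

theorem mem_lang_iff_eval_mem_final {δ : (f : F) → (Fin (ar f) → Q) → Q}
    (hδ : ∀ f qs q, A.delta f qs q ↔ δ f qs = q) (t : GTm F ar) :
    t ∈ A.Lang ↔ (t.toTm : Tm F ar Q).eval δ ∈ A.final := by
  constructor
  · rintro ⟨q, hq, hsteps⟩
    rwa [← hsteps.eval_eq fun f qs q => (hδ f qs q).1]
  · exact fun h => ⟨_, h, steps_var_eval (fun f qs => (hδ f qs _).2 rfl) _⟩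

end Automaton

def IsSRedex {V : Type} (s : Tm SSig sar V) : Prop :=
  ∃ x y z : Tm SSig sar V, s = app (app (app STm x) y) z

def ContainsSRedex {V : Type} (t : Tm SSig sar V) : Prop :=
  ∃ s : Tm SSig sar V, Tm.Subtm s t ∧ IsSRedex s

section Terms

variable {V : Type}

theorem app_inj {u v u' v' : Tm SSig sar V} : app u v = app u' v' ↔ u = u' ∧ v = v' := by
  refine ⟨fun h => ?_, fun ⟨hu, hv⟩ => hu ▸ hv ▸ rfl⟩
  have hts := eq_of_heq (Tm.node.inj h).2
  exact ⟨congrFun hts i0, congrFun hts i1⟩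

theorem STm_ne_app {u v : Tm SSig sar V} : STm ≠ app u v := fun h => nomatch Tm.node.inj h

theorem subtm_STm_iff {s : Tm SSig sar V} : Tm.Subtm s STm ↔ s = STm := by
  refine ⟨fun h => ?_, fun h => h ▸ .refl _⟩
  cases h with
  | refl => rfl
  | child i _ => exact i.elim0

theorem subtm_app_iff {s u v : Tm SSig sar V} :
    Tm.Subtm s (app u v) ↔ s = app u v ∨ Tm.Subtm s u ∨ Tm.Subtm s v := by
  refine ⟨fun h => ?_, ?_⟩
  · cases h with
    | refl => exact .inl rfl
    | child i h =>
      fin_cases i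
      · exact .inr (.inl h)
      · exact .inr (.inr h)
  · rintro (rfl | h | h)
    · exact .refl _
    · exact .child i0 h
    · exact .child i1 h

theorem isSRedex_app_iff {u v : Tm SSig sar V} :
    IsSRedex (app u v) ↔ ∃ x y, u = app (app STm x) y := by
  simp only [IsSRedex, app_inj]
  exact ⟨fun ⟨x, y, _, hu, _⟩ => ⟨x, y, hu⟩, fun ⟨x, y, hu⟩ => ⟨x, y, v, hu, rfl⟩⟩

theorem not_containsSRedex_STm : ¬ ContainsSRedex (STm : Tm SSig sar V) := by
  rintro ⟨s, hs, x, y, z, rfl⟩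
  exact STm_ne_app (subtm_STm_iff.1 hs).symm

theorem containsSRedex_app_iff {u v : Tm SSig sar V} :
    ContainsSRedex (app u v) ↔ IsSRedex (app u v) ∨ ContainsSRedex u ∨ ContainsSRedex v := by
  simp only [ContainsSRedex, subtm_app_iff, or_and_right, exists_or, exists_eq_left]

end Terms

@[elab_as_elim]
theorem GTm.app_induction {P : GTm SSig sar → Prop} (S : P STm)
    (app : ∀ u v, P u → P v → P (app u v)) (t : GTm SSig sar) : P t := by
  induction t with
  | var e => exact e.elim
  | node f ts ih =>
    cases f with
    | S => exact (funext fun i => i.elim0 : ts = ![]) ▸ S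
    | a =>
      have hts : ts = ![ts i0, ts i1] := by
        funext j
        fin_cases j <;> rfl
      exact hts ▸ app _ _ (ih i0) (ih i1)

def bsApp (q₀ q₁ : Fin 4) : Fin 4 :=
  if q₁ = 3 then 3 else if q₀ = 0 then 1 else if q₀ = 1 then 2 else 3

def bsDelta : (f : SSig) → (Fin (sar f) → Fin 4) → Fin 4
  | .S, _ => 0
  | .a, qs => bsApp (qs i0) (qs i1)

theorem BS_delta_iff (f : SSig) (qs : Fin (sar f) → Fin 4) (q : Fin 4) :
    BS.delta f qs q ↔ bsDelta f qs = q := by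
  cases f with
  | S => exact eq_comm
  | a =>
    dsimp only [BS, bsDelta]
    generalize qs i0 = q₀, qs i1 = q₁
    revert q₀ q₁ q
    decide

def bsState (t : GTm SSig sar) : Fin 4 := (t.toTm : Tm SSig sar (Fin 4)).eval bsDelta

theorem bsState_app (u v : GTm SSig sar) : bsState (app u v) = bsApp (bsState u) (bsState v) :=
  rfl

theorem bsApp_ne_zero (q₀ q₁ : Fin 4) : bsApp q₀ q₁ ≠ 0 := by
  revert q₀ q₁; decide

theorem bsApp_eq_one {q₀ q₁ : Fin 4} : bsApp q₀ q₁ = 1 → q₀ = 0 := by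
  revert q₀ q₁; decide

theorem bsApp_eq_two {q₀ q₁ : Fin 4} : bsApp q₀ q₁ = 2 → q₀ = 1 := by
  revert q₀ q₁; decide

theorem bsApp_eq_three_iff {q₀ q₁ : Fin 4} : bsApp q₀ q₁ = 3 ↔ 2 ≤ q₀ ∨ q₁ = 3 := by
  revert q₀ q₁; decide

theorem two_le_bsApp_bsApp_zero (q₁ q₂ : Fin 4) : 2 ≤ bsApp (bsApp 0 q₁) q₂ := by
  revert q₁ q₂; decide

theorem eq_STm_of_bsState_eq_zero {t : GTm SSig sar} (h : bsState t = 0) : t = STm := by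
  induction t using GTm.app_induction with
  | S => rfl
  | app u v => exact absurd (bsState_app u v ▸ h) (bsApp_ne_zero _ _)

theorem exists_eq_app_STm_of_bsState_eq_one {t : GTm SSig sar} (h : bsState t = 1) :
    ∃ x, t = app STm x := by
  induction t using GTm.app_induction with
  | S => exact absurd h (by decide)
  | app u v =>
    rw [bsState_app] at h
    exact ⟨v, by rw [eq_STm_of_bsState_eq_zero (bsApp_eq_one h)]⟩

theorem exists_eq_app_app_STm_of_bsState_eq_two {t : GTm SSig sar} (h : bsState t = 2) :
    ∃ x y, t = app (app STm x) y := by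
  induction t using GTm.app_induction with
  | S => exact absurd h (by decide)
  | app u v =>
    rw [bsState_app] at h
    obtain ⟨x, rfl⟩ := exists_eq_app_STm_of_bsState_eq_one (bsApp_eq_two h)
    exact ⟨x, v, rfl⟩

theorem two_le_bsState_iff_isSRedex_app_or_eq_three (u v : GTm SSig sar) :
    2 ≤ bsState u ↔ IsSRedex (app u v) ∨ bsState u = 3 := by
  rw [isSRedex_app_iff]
  constructor
  · intro h
    rcases (by omega : bsState u = 2 ∨ bsState u = 3) with h2 | h3
    · exact .inl (exists_eq_app_app_STm_of_bsState_eq_two h2)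
    · exact .inr h3
  · rintro (⟨x, y, rfl⟩ | h3)
    · exact two_le_bsApp_bsApp_zero _ _
    · rw [h3]; decide

theorem bsState_eq_three_iff (t : GTm SSig sar) : bsState t = 3 ↔ ContainsSRedex t := by
  induction t using GTm.app_induction with
  | S => exact iff_of_false (by decide) not_containsSRedex_STm
  | app u v ihu ihv =>
    rw [bsState_app, bsApp_eq_three_iff, containsSRedex_app_iff, ← ihu, ← ihv,
      two_le_bsState_iff_isSRedex_app_or_eq_three u v, or_assoc]

/-- `B_S` accepts a ground term iff it contains a redex of the `S`-rule
`a(a(a(S,x),y),z) → a(a(x,z),a(y,z))`, i.e. a subterm of the form `a(a(a(S,x),y),z)`. -/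
theorem BS_accepts_iff_contains_redex (t : GTm SSig sar) :
    t ∈ BS.Lang ↔
      ∃ s : GTm SSig sar, Tm.Subtm s t ∧
        ∃ x y z : GTm SSig sar, s = app (app (app STm x) y) z := by
  rw [Automaton.mem_lang_iff_eval_mem_final BS_delta_iff]
  exact bsState_eq_three_iff t
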